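/- Let g be a synchronizing q-uniform morphism from {0,1,2}* to {0,1}* and let t satisfy 2t < q. Suppose that no image g(w) of a ternary square-free word w contains a square uu with t ≤ |u| ≤ 2q−2, and no image g(w) of a ternary square-free word w of length 3 contains a square of period exactly q. Then for every ternary square-free word w, the word g(w) contains no square uu with |u| ≥ t. -/

import Mathlib

def g2w (g : Fin 3 → List Bool) (w : List (Fin 3)) : List Bool :=
  (w.map g).flatten

def SqFree {α : Type*} (w : List α) : Prop :=
  ∀ X : List α, X ≠ [] → ¬ (X ++ X) <:+: w

/-!
Squares of period at most `2q - 2` are excluded by hypothesis, so let `uu` be a square of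
period `|u| ≥ 2q - 1` in `g(w)`. The first `u` contains a whole block `g(w_j)`, and its copy one
period later is again an occurrence of an image letter; by synchronization it is aligned with
the blocks, so `q ∣ |u|`. Cutting `g(w)` along block boundaries, the preimage of the square then
reads `a X b X c` with `g a = P Y`, `g b = T Y`, `g c = T Z`, where `|P| = |T| < q` is the offset
of the square in its first block, and `g` is injective (apply the hypothesis on triples to `aba`).
Square-freeness of `w` forces `a ≠ b`, hence `T ≠ []`, and `b ≠ c`; so `abc` is square-free,
while `g(abc) = P (YT)(YT) Z` contains a square of period `q`.
-/

namespace SqFree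

variable {α : Type*} {v w X r : List α} {a b c : α}

theorem of_infix (h : v <:+: w) (hw : SqFree w) : SqFree v :=
  fun X hX hXv => hw X hX (hXv.trans h)

theorem ne_of_cons_append_cons (hw : SqFree (a :: X ++ b :: X ++ r)) : a ≠ b := by
  rintro rfl
  exact hw (a :: X) (List.cons_ne_nil _ _) ⟨[], r, by simp⟩

theorem ne_of_append_cons_append_cons (hw : SqFree (X ++ b :: X ++ c :: r)) : b ≠ c := by
  rintro rfl
  exact hw (X ++ [b]) (by simp) ⟨[], r, by simp⟩

end SqFree

theorem sqFree_triple {α : Type*} {a b c : α} (hab : a ≠ b) (hbc : b ≠ c) : SqFree [a, b, c] := by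
  rintro X hX ⟨s, t, hst⟩
  have hlen := congrArg List.length hst
  simp only [List.length_append, List.length_cons, List.length_nil] at hlen
  obtain ⟨x, rfl⟩ : ∃ x, X = [x] :=
    List.length_eq_one_iff.mp (by have := List.length_pos_iff.mpr hX; omega)
  match s, hst with
  | [], h =>
    simp only [List.nil_append, List.cons_append, List.cons.injEq] at h
    exact hab (h.1.symm.trans h.2.1)
  | [_], h =>
    simp only [List.cons_append, List.nil_append, List.cons.injEq] at h
    exact hbc (h.2.1.symm.trans h.2.2.1)
  | _ :: _ :: _, _ => simp at hlen; omega

theorem List.exists_eq_append_length_dvd {α : Type*} (s : List α) (q : ℕ) :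
    ∃ s₁ s₂, s = s₁ ++ s₂ ∧ q ∣ s₁.length ∧ s₂.length = s.length % q :=
  ⟨s.take (q * (s.length / q)), s.drop (q * (s.length / q)), (List.take_append_drop _ _).symm,
    by rw [List.length_take, min_eq_left (Nat.mul_div_le _ _)]; exact Dvd.intro _ rfl,
    by rw [List.length_drop, ← Nat.mod_def]⟩

section

variable {g : Fin 3 → List Bool} {q : ℕ}

@[simp] theorem g2w_nil : g2w g [] = [] := rfl

@[simp] theorem g2w_cons (a : Fin 3) (w : List (Fin 3)) : g2w g (a :: w) = g a ++ g2w g w := rfl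

theorem length_g2w (hq : ∀ a, (g a).length = q) (w : List (Fin 3)) :
    (g2w g w).length = q * w.length := by
  induction w with
  | nil => simp
  | cons a w ih => rw [g2w_cons, List.length_append, hq, ih, List.length_cons]; ring

theorem g2w_take (hq : ∀ a, (g a).length = q) (w : List (Fin 3)) (k : ℕ) :
    g2w g (w.take k) = (g2w g w).take (q * k) := by
  induction k generalizing w with
  | zero => simp
  | succ k ih =>
    cases w with
    | nil => simp
    | cons a w => rw [List.take_succ_cons, g2w_cons, g2w_cons, ih, Nat.mul_succ, Nat.add_comm,
        ← hq a, List.take_length_add_append]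

theorem g2w_drop (hq : ∀ a, (g a).length = q) (w : List (Fin 3)) (k : ℕ) :
    g2w g (w.drop k) = (g2w g w).drop (q * k) := by
  induction k generalizing w with
  | zero => simp
  | succ k ih =>
    cases w with
    | nil => simp
    | cons a w => rw [List.drop_succ_cons, g2w_cons, ih, Nat.mul_succ, Nat.add_comm,
        ← hq a, List.drop_length_add_append]

theorem exists_eq_append_of_g2w_eq_append (hq : ∀ a, (g a).length = q) {w : List (Fin 3)}
    {A B : List Bool} (h : g2w g w = A ++ B) (hA : q ∣ A.length) :
    ∃ w₁ w₂, w = w₁ ++ w₂ ∧ g2w g w₁ = A ∧ g2w g w₂ = B := by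
  obtain ⟨k, hk⟩ := hA
  exact ⟨w.take k, w.drop k, (List.take_append_drop k w).symm,
    by rw [g2w_take hq, h, List.take_left' hk],
    by rw [g2w_drop hq, h, List.drop_left' hk]⟩

theorem exists_eq_cons_of_g2w_eq_append (hq : ∀ a, (g a).length = q) (hq0 : 0 < q)
    {w : List (Fin 3)} {A B : List Bool} (h : g2w g w = A ++ B) (hA : A.length = q) :
    ∃ a w', w = a :: w' ∧ g a = A ∧ g2w g w' = B := by
  cases w with
  | nil =>
    have := congrArg List.length h
    simp at this; omega
  | cons a w' =>
    obtain ⟨ha, hw'⟩ := List.append_inj h (by rw [hq, hA])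
    exact ⟨a, w', rfl, ha, hw'⟩

theorem g2w_injective (hq : ∀ a, (g a).length = q) (hq0 : 0 < q) (hg : Function.Injective g) :
    Function.Injective (g2w g) := by
  intro v
  induction v with
  | nil =>
    intro v' h
    have hlen := length_g2w hq v'
    rw [← h, g2w_nil, List.length_nil, eq_comm, Nat.mul_eq_zero] at hlen
    exact (List.eq_nil_of_length_eq_zero (hlen.resolve_left hq0.ne')).symm
  | cons a v ih =>
    intro v' h
    obtain ⟨b, v'', rfl, hb, hv⟩ :=
      exists_eq_cons_of_g2w_eq_append hq hq0 (g2w_cons a v ▸ h.symm) (hq a)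
    rw [hg hb, ih hv.symm]

theorem dvd_length_of_g2w_eq_append (hq : ∀ a, (g a).length = q) (hq0 : 0 < q)
    (hsync : ∀ a b c : Fin 3, ∀ u v : List Bool,
      g b ++ g c = u ++ g a ++ v → u.length = 0 ∨ u.length = q)
    {w : List (Fin 3)} {A B : List Bool} {a : Fin 3} (h : g2w g w = A ++ g a ++ B) :
    q ∣ A.length := by
  obtain ⟨A₁, A₂, rfl, hA₁, hA₂⟩ := A.exists_eq_append_length_dvd q
  suffices hA₂0 : A₂.length = 0 by rwa [List.length_append, hA₂0]
  have hA₂q : A₂.length < q := hA₂ ▸ Nat.mod_lt _ hq0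
  obtain ⟨-, w₂, -, -, h₂⟩ := exists_eq_append_of_g2w_eq_append hq
    (B := A₂ ++ g a ++ B) (by rw [h]; simp only [List.append_assoc]) hA₁
  by_contra hA₂0
  have hlen := congrArg List.length h₂
  simp only [length_g2w hq, List.length_append, hq] at hlen
  match w₂, h₂, hlen with
  | b :: c :: w₃, h₂, _ =>
    -- `g a` straddles the blocks `g b` and `g c`, which synchronization forbids
    have hbc : g b ++ g c = A₂ ++ g a ++ B.take (q - A₂.length) := by
      have := congrArg (List.take (q + q)) h₂
      rw [g2w_cons, g2w_cons, ← List.append_assoc, List.take_left' (by simp [hq])] at this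
      rw [this, show q + q = (A₂ ++ g a).length + (q - A₂.length) by simp [hq]; omega,
        List.take_length_add_append]
    rcases hsync a b c _ _ hbc with h0 | hq' <;> omega
  | [], _, hlen => simp at hlen; omega
  | [_], _, hlen => simp at hlen; omega

theorem dvd_length_of_g2w_eq_square (hq : ∀ a, (g a).length = q) (hq0 : 0 < q)
    (hsync : ∀ a b c : Fin 3, ∀ u v : List Bool,
      g b ++ g c = u ++ g a ++ v → u.length = 0 ∨ u.length = q)
    {w : List (Fin 3)} {s u tl : List Bool} (h : g2w g w = s ++ (u ++ u) ++ tl)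
    (hu : 2 * q - 1 ≤ u.length) : q ∣ u.length := by
  -- `U₂` is the first block of `g2w g w` lying inside the first copy of `u`
  have hk := Nat.div_add_mod (s.length + q - 1) q
  have hmod := Nat.mod_lt (s.length + q - 1) hq0
  set k := (s.length + q - 1) / q
  obtain ⟨U₁, U₂, U₃, rfl, hU₁, hU₂⟩ : ∃ U₁ U₂ U₃, u = U₁ ++ U₂ ++ U₃ ∧
      s.length + U₁.length = q * k ∧ U₂.length = q :=
    ⟨u.take (q * k - s.length), (u.drop (q * k - s.length)).take q,
      (u.drop (q * k - s.length)).drop q, by simp, by simp; omega, by simp; omega⟩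
  obtain ⟨-, w₂, -, -, h₂⟩ := exists_eq_append_of_g2w_eq_append hq
    (A := s ++ U₁) (B := U₂ ++ (U₃ ++ (U₁ ++ U₂ ++ U₃) ++ tl))
    (by rw [h]; simp only [List.append_assoc])
    (by rw [List.length_append, hU₁]; exact Dvd.intro _ rfl)
  obtain ⟨b, -, -, hb, -⟩ := exists_eq_cons_of_g2w_eq_append hq hq0 h₂ hU₂
  have hocc : g2w g w = (s ++ (U₁ ++ U₂ ++ U₃) ++ U₁) ++ g b ++ (U₃ ++ tl) := by
    rw [h, hb]; simp only [List.append_assoc]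
  have := dvd_length_of_g2w_eq_append hq hq0 hsync hocc
  rw [List.length_append, List.length_append, Nat.add_right_comm, hU₁] at this
  exact (Nat.dvd_add_right (Dvd.intro _ rfl)).mp this

theorem exists_triple_of_g2w_eq_square_of_length_lt (hq : ∀ a, (g a).length = q) (hq0 : 0 < q)
    (hg : Function.Injective g) {w : List (Fin 3)} (hw : SqFree w) {P u tl : List Bool}
    (h : g2w g w = P ++ (u ++ u) ++ tl) (hP : P.length < q) (hu : q ∣ u.length)
    (hu0 : u ≠ []) :
    ∃ a b c, SqFree [a, b, c] ∧ ∃ y : List Bool, y.length = q ∧ (y ++ y) <:+: g2w g [a, b, c] := by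
  obtain ⟨L, hL⟩ := hu
  obtain ⟨L, rfl⟩ : ∃ L', L = L' + 1 :=
    ⟨L - 1, by have := List.length_pos_iff.mpr hu0; rw [hL] at this; simp at this; omega⟩
  have hqL : q * (L + 1) = q * L + q := Nat.mul_succ q L
  -- `u = Y ++ M ++ T`, where `P ++ Y` and `T ++ Y` are blocks and `M` is a run of `L` blocks
  obtain ⟨Y, M, T, rfl, hY, hM, hT⟩ : ∃ Y M T, u = Y ++ M ++ T ∧ Y.length = q - P.length ∧
      M.length = q * L ∧ T.length = P.length :=
    ⟨u.take (q - P.length), (u.drop (q - P.length)).take (q * L),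
      (u.drop (q - P.length)).drop (q * L), by simp, by simp; omega, by simp; omega,
      by simp; omega⟩
  have h' : g2w g w = (P ++ Y) ++ (M ++ ((T ++ Y) ++ (M ++ (T ++ tl)))) := by
    rw [h]; simp only [List.append_assoc]
  obtain ⟨a, w₁, rfl, ha, h₁⟩ := exists_eq_cons_of_g2w_eq_append hq hq0 h' (by simp; omega)
  obtain ⟨X, w₂, rfl, hX, h₂⟩ := exists_eq_append_of_g2w_eq_append hq h₁ (hM ▸ Dvd.intro _ rfl)
  obtain ⟨b, w₃, rfl, hb, h₃⟩ := exists_eq_cons_of_g2w_eq_append hq hq0 h₂ (by simp; omega)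
  obtain ⟨X', w₄, rfl, hX', h₄⟩ := exists_eq_append_of_g2w_eq_append hq h₃ (hM ▸ Dvd.intro _ rfl)
  obtain rfl : X = X' := g2w_injective hq hq0 hg (hX.trans hX'.symm)
  have hab : a ≠ b := SqFree.ne_of_cons_append_cons (r := w₄) (by simpa using hw)
  have hT0 : T ≠ [] := by
    rintro rfl
    exact hab (hg (by rw [ha, hb, List.eq_nil_of_length_eq_zero hT.symm]))
  obtain ⟨c, w₅, rfl, Z, hZ⟩ : ∃ c w₅, w₄ = c :: w₅ ∧ ∃ Z, T ++ Z = g c := by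
    match w₄, h₄ with
    | [], h₄ => exact absurd (List.append_eq_nil_iff.mp h₄.symm).1 hT0
    | c :: w₅, h₄ =>
      refine ⟨c, w₅, rfl, List.prefix_of_prefix_length_le ⟨tl, h₄.symm⟩ ?_ (by rw [hq]; omega)⟩
      exact ⟨g2w g w₅, rfl⟩
  have hbc : b ≠ c := SqFree.ne_of_append_cons_append_cons (X := X) (r := w₅)
    (by simpa using hw.of_infix (List.suffix_cons a _).isInfix)
  refine ⟨a, b, c, sqFree_triple hab hbc, Y ++ T, by simp; omega, P, Z, ?_⟩
  simp [ha, hb, ← hZ]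

theorem exists_triple_of_g2w_eq_square (hq : ∀ a, (g a).length = q) (hq0 : 0 < q)
    (hg : Function.Injective g) {w : List (Fin 3)} (hw : SqFree w) {s u tl : List Bool}
    (h : g2w g w = s ++ (u ++ u) ++ tl) (hu : q ∣ u.length) (hu0 : u ≠ []) :
    ∃ a b c, SqFree [a, b, c] ∧ ∃ y : List Bool, y.length = q ∧ (y ++ y) <:+: g2w g [a, b, c] := by
  obtain ⟨s₁, P, rfl, hs₁, hP⟩ := s.exists_eq_append_length_dvd q
  obtain ⟨w₁, w₂, rfl, -, h₂⟩ := exists_eq_append_of_g2w_eq_append hq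
    (B := P ++ (u ++ u) ++ tl) (by rw [h]; simp only [List.append_assoc]) hs₁
  exact exists_triple_of_g2w_eq_square_of_length_lt hq hq0 hg
    (hw.of_infix (List.suffix_append _ _).isInfix) h₂ (hP ▸ Nat.mod_lt _ hq0) hu hu0

end

theorem stmt14 (g : Fin 3 → List Bool) (q t : ℕ)
    (hq : ∀ a, (g a).length = q)
    (hsync : ∀ a b c : Fin 3, ∀ u v : List Bool,
      g b ++ g c = u ++ g a ++ v → u.length = 0 ∨ u.length = q)
    (ht : 2 * t < q)
    (hshort : ∀ w : List (Fin 3), SqFree w →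
      ∀ u : List Bool, t ≤ u.length → u.length ≤ 2 * q - 2 → ¬ (u ++ u) <:+: g2w g w)
    (htriple : ∀ w : List (Fin 3), SqFree w → w.length = 3 →
      ∀ u : List Bool, u.length = q → ¬ (u ++ u) <:+: g2w g w) :
    ∀ w : List (Fin 3), SqFree w →
      ∀ u : List Bool, t ≤ u.length → ¬ (u ++ u) <:+: g2w g w := by
  have hq0 : 0 < q := by omega
  have hg : Function.Injective g := fun a b hab => by
    by_contra hne
    exact htriple [a, b, a] (sqFree_triple hne (Ne.symm hne)) rfl (g a) (hq a)
      ⟨[], g a, by simp [hab]⟩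
  intro w hw u hut hsq
  by_cases hlong : u.length ≤ 2 * q - 2
  · exact hshort w hw u hut hlong hsq
  obtain ⟨s, tl, h⟩ := hsq
  have hu0 : u ≠ [] := fun h => by simp [h] at hlong
  obtain ⟨a, b, c, habc, y, hy, hsq⟩ := exists_triple_of_g2w_eq_square hq hq0 hg hw h.symm
    (dvd_length_of_g2w_eq_square hq hq0 hsync h.symm (by omega)) hu0
  exact htriple _ habc rfl y hy hsq
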